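/- arXiv:1907.05733 — 4 statements merged into one kernel-verified Lean document; each statement's English description precedes it below -/
import Mathlib

section
/- Let X and Y be real normed spaces and let F : X → Y be almost-linear with constant δ > 0. Let |||(y,x)|||_F := ‖y − F(x)‖_Y/δ + ‖x‖_X and let N be the envelope norm N(y,x) := inf{ Σⱼ |||(yⱼ,xⱼ)|||_F : (y,x) = Σⱼ (yⱼ,xⱼ) }. Then for all (y,x) ∈ Y × X: N(y,x) ≤ |||(y,x)|||_F ≤ 2·N(y,x). -/
open Finset

/-- `F` is almost-linear with constant `δ`. -/
def AlmostLinear {X Y : Type*} [NormedAddCommGroup X] [NormedSpace ℝ X]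
    [NormedAddCommGroup Y] [NormedSpace ℝ Y] (F : X → Y) (δ : ℝ) : Prop :=
  (∀ (c : ℝ) (x : X), F (c • x) = c • F x) ∧
  ∀ (m : ℕ) (x : Fin m → X) (l : Fin m → ℝ),
    ‖(∑ i, l i • F (x i)) - F (∑ i, l i • x i)‖ ≤ δ * ∑ i, |l i| * ‖x i‖

/-- The quasi-norm on `Y × X` associated to `F`. -/
noncomputable def quasiNormF {X Y : Type*} [NormedAddCommGroup X] [NormedAddCommGroup Y]
    (F : X → Y) (δ : ℝ) (z : Y × X) : ℝ :=
  ‖z.1 - F z.2‖ / δ + ‖z.2‖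

/-- The envelope norm generated by a (quasi-)norm-like function `q`. -/
noncomputable def envNorm {Z : Type*} [AddCommGroup Z] (q : Z → ℝ) (z : Z) : ℝ :=
  sInf { s : ℝ | ∃ (n : ℕ) (w : Fin n → Z), z = ∑ j, w j ∧ s = ∑ j, q (w j) }

/-- `Z` (with norm-like function `nn`) satisfies the Rademacher type-2 inequality
for sequences of length `n` with constant `T`. -/
def RadType2With {Z : Type*} [AddCommGroup Z] (nn : Z → ℝ) (n : ℕ) (T : ℝ) : Prop :=
  ∀ z : Fin n → Z,
    Real.sqrt ((∑ ε : Fin n → Bool, nn (∑ j, if ε j then z j else -z j) ^ 2) / 2 ^ n) ≤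
      T * Real.sqrt (∑ j, nn (z j) ^ 2)

/-- Rademacher cotype-2 inequality with constant `C`. -/
def RadCotype2With {Z : Type*} [AddCommGroup Z] (nn : Z → ℝ) (n : ℕ) (C : ℝ) : Prop :=
  ∀ z : Fin n → Z,
    Real.sqrt (∑ j, nn (z j) ^ 2) ≤
      C * Real.sqrt ((∑ ε : Fin n → Bool, nn (∑ j, if ε j then z j else -z j) ^ 2) / 2 ^ n)


lemma quasiNormF_nonneg {X Y : Type*} [NormedAddCommGroup X] [NormedAddCommGroup Y]
    (F : X → Y) {δ : ℝ} (hδ : 0 < δ) (z : Y × X) : 0 ≤ quasiNormF F δ z :=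
  add_nonneg (div_nonneg (norm_nonneg _) hδ.le) (norm_nonneg _)

lemma key_decomp {X Y : Type*} [NormedAddCommGroup X] [NormedSpace ℝ X]
    [NormedAddCommGroup Y] [NormedSpace ℝ Y]
    (F : X → Y) (δ : ℝ) (hδ : 0 < δ) (hF : AlmostLinear F δ)
    {z : Y × X} {n : ℕ} {w : Fin n → Y × X} (hz : z = ∑ j, w j) :
    quasiNormF F δ z ≤ 2 * ∑ j, quasiNormF F δ (w j) := by
  have h1 : z.1 = ∑ j, (w j).1 := by rw [hz]; exact Prod.fst_sum
  have h2 : z.2 = ∑ j, (w j).2 := by rw [hz]; exact Prod.snd_sum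
  have hAL := hF.2 n (fun j => (w j).2) (fun _ => (1 : ℝ))
  simp only [one_smul, abs_one, one_mul] at hAL
  have hnorm : ‖z.1 - F z.2‖ ≤ (∑ j, ‖(w j).1 - F (w j).2‖) + δ * ∑ j, ‖(w j).2‖ := by
    calc ‖z.1 - F z.2‖
        = ‖(∑ j, ((w j).1 - F (w j).2)) + ((∑ j, F (w j).2) - F (∑ j, (w j).2))‖ := by
          rw [h1, h2, Finset.sum_sub_distrib]; congr 1; abel
      _ ≤ ‖∑ j, ((w j).1 - F (w j).2)‖ + ‖(∑ j, F (w j).2) - F (∑ j, (w j).2)‖ :=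
          norm_add_le _ _
      _ ≤ (∑ j, ‖(w j).1 - F (w j).2‖) + δ * ∑ j, ‖(w j).2‖ :=
          add_le_add (norm_sum_le _ _) hAL
  have hx : ‖z.2‖ ≤ ∑ j, ‖(w j).2‖ := h2 ▸ norm_sum_le _ _
  have hA : ‖z.1 - F z.2‖ / δ ≤
      ((∑ j, ‖(w j).1 - F (w j).2‖) + δ * ∑ j, ‖(w j).2‖) / δ := by gcongr
  rw [add_div, mul_div_cancel_left₀ _ hδ.ne'] at hA
  have hR : ∑ j, quasiNormF F δ (w j)
      = (∑ j, ‖(w j).1 - F (w j).2‖) / δ + ∑ j, ‖(w j).2‖ := by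
    unfold quasiNormF; rw [Finset.sum_add_distrib, Finset.sum_div]
  have hB : 0 ≤ (∑ j, ‖(w j).1 - F (w j).2‖) / δ :=
    div_nonneg (Finset.sum_nonneg fun _ _ => norm_nonneg _) hδ.le
  rw [hR]
  unfold quasiNormF
  linarith

theorem stmt4 {X Y : Type*} [NormedAddCommGroup X] [NormedSpace ℝ X]
    [NormedAddCommGroup Y] [NormedSpace ℝ Y]
    (F : X → Y) (δ : ℝ) (hδ : 0 < δ) (hF : AlmostLinear F δ) :
    ∀ z : Y × X,
      envNorm (quasiNormF F δ) z ≤ quasiNormF F δ z ∧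
      quasiNormF F δ z ≤ 2 * envNorm (quasiNormF F δ) z := by
  intro z
  set S := { s : ℝ | ∃ (n : ℕ) (w : Fin n → Y × X), z = ∑ j, w j ∧ s = ∑ j, quasiNormF F δ (w j) }
  have hbdd : BddBelow S := by
    refine ⟨0, fun s hs => ?_⟩
    obtain ⟨n, w, _, rfl⟩ := hs
    exact Finset.sum_nonneg fun j _ => quasiNormF_nonneg F hδ _
  have hmem : quasiNormF F δ z ∈ S := by
    refine ⟨1, fun _ => z, ?_, ?_⟩ <;> simp
  have he : envNorm (quasiNormF F δ) z = sInf S := rfl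
  constructor
  · rw [he]; exact csInf_le hbdd hmem
  · have h : quasiNormF F δ z / 2 ≤ sInf S := by
      refine le_csInf ⟨_, hmem⟩ fun s hs => ?_
      obtain ⟨n, w, hz, rfl⟩ := hs
      linarith [key_decomp F δ hδ hF hz]
    rw [he]; linarith
end

section
/- Let X and Y be real normed spaces and let F : X → Y be almost-linear with constant δ > 0. Then the function |||(y,x)|||_F := ‖y − F(x)‖_Y/δ + ‖x‖_X on Y × X is a quasi-norm with modulus of concavity 2: it is absolutely homogeneous (|||λ(y,x)|||_F = |λ|·|||(y,x)|||_F for all λ ∈ ℝ), it vanishes only at (0,0), and |||z₁ + z₂|||_F ≤ 2(|||z₁|||_F + |||z₂|||_F) for all z₁, z₂ ∈ Y × X. -/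
open Finset

theorem stmt5 {X Y : Type*} [NormedAddCommGroup X] [NormedSpace ℝ X]
    [NormedAddCommGroup Y] [NormedSpace ℝ Y]
    (F : X → Y) (δ : ℝ) (hδ : 0 < δ) (hF : AlmostLinear F δ) :
    (∀ (c : ℝ) (z : Y × X), quasiNormF F δ (c • z) = |c| * quasiNormF F δ z) ∧
    (∀ z : Y × X, quasiNormF F δ z = 0 → z = 0) ∧
    (∀ z₁ z₂ : Y × X,
      quasiNormF F δ (z₁ + z₂) ≤ 2 * (quasiNormF F δ z₁ + quasiNormF F δ z₂)) := by
  obtain ⟨hhom, hadd⟩ := hF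
  have hF0 : F 0 = 0 := by
    have := hhom 0 0
    simpa using this
  refine ⟨?_, ?_, ?_⟩
  · intro c z
    simp only [quasiNormF, Prod.smul_fst, Prod.smul_snd, hhom, ← smul_sub, norm_smul,
      Real.norm_eq_abs, mul_add, mul_div_assoc]
  · intro z hz
    have h1 : 0 ≤ ‖z.1 - F z.2‖ / δ := div_nonneg (norm_nonneg _) hδ.le
    have h2 : 0 ≤ ‖z.2‖ := norm_nonneg _
    have hz' : ‖z.1 - F z.2‖ / δ + ‖z.2‖ = 0 := hz
    have hx : ‖z.2‖ = 0 := by linarith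
    have hx2 : z.2 = 0 := norm_eq_zero.mp hx
    have hy : ‖z.1 - F z.2‖ / δ = 0 := by
      linarith
    have hy2 : z.1 - F z.2 = 0 := by
      have := (div_eq_zero_iff.mp hy).resolve_right (by positivity)
      exact norm_eq_zero.mp this
    have : z.1 = 0 := by
      rw [hx2, hF0, sub_zero] at hy2; exact hy2
    exact Prod.ext this hx2
  · intro z₁ z₂
    obtain ⟨y₁, x₁⟩ := z₁
    obtain ⟨y₂, x₂⟩ := z₂
    have key : ‖F x₁ + F x₂ - F (x₁ + x₂)‖ ≤ δ * (‖x₁‖ + ‖x₂‖) := by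
      have := hadd 2 ![x₁, x₂] ![1, 1]
      simpa [Fin.sum_univ_two] using this
    simp only [quasiNormF, Prod.mk_add_mk]
    have h1 : ‖y₁ + y₂ - F (x₁ + x₂)‖ ≤ ‖y₁ - F x₁‖ + ‖y₂ - F x₂‖ + δ * (‖x₁‖ + ‖x₂‖) := by
      calc ‖y₁ + y₂ - F (x₁ + x₂)‖
          = ‖(y₁ - F x₁) + (y₂ - F x₂) + (F x₁ + F x₂ - F (x₁ + x₂))‖ := by abel_nf
        _ ≤ ‖(y₁ - F x₁) + (y₂ - F x₂)‖ + ‖F x₁ + F x₂ - F (x₁ + x₂)‖ := norm_add_le _ _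
        _ ≤ ‖y₁ - F x₁‖ + ‖y₂ - F x₂‖ + δ * (‖x₁‖ + ‖x₂‖) := by
            have := norm_add_le (y₁ - F x₁) (y₂ - F x₂); linarith
    have h2 : ‖y₁ + y₂ - F (x₁ + x₂)‖ / δ ≤ (‖y₁ - F x₁‖ + ‖y₂ - F x₂‖) / δ + (‖x₁‖ + ‖x₂‖) := by
      rw [div_add' _ _ _ hδ.ne', div_le_div_iff_of_pos_right hδ]
      linarith
    have h3 : ‖x₁ + x₂‖ ≤ ‖x₁‖ + ‖x₂‖ := norm_add_le _ _
    have hd1 : 0 ≤ ‖y₁ - F x₁‖ / δ := div_nonneg (norm_nonneg _) hδ.le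
    have hd2 : 0 ≤ ‖y₂ - F x₂‖ / δ := div_nonneg (norm_nonneg _) hδ.le
    have : (‖y₁ - F x₁‖ + ‖y₂ - F x₂‖) / δ = ‖y₁ - F x₁‖ / δ + ‖y₂ - F x₂‖ / δ := add_div _ _ _
    linarith
end

section
/- Let ε > 0 and let f be a continuous function from the closed unit ball B of S₂^d to S₂^d satisfying |⟨f(x),f(y)⟩ − ⟨x,y⟩| ≤ ε for all x, y ∈ B. Define F : S₂^d → S₂^d by F(0) := 0 and F(x) := ‖x‖₂·( f(x/(2‖x‖₂)) − f(−x/(2‖x‖₂)) ) for x ≠ 0. Then: (1) F is continuous; (2) F(λx) = λF(x) for all λ ∈ ℝ and x ∈ S₂^d; (3) for every finite sequence x₁,…,x_n ∈ S₂^d: ‖Σⱼ F(xⱼ) − F(Σⱼ xⱼ)‖₂ ≤ 4√ε·Σⱼ ‖xⱼ‖₂; and (4) ‖f(x) − F(x)‖₂ ≤ 3√ε for all x ∈ B. -/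
open Finset Matrix

/-- The real vector space of `d × d` complex Hermitian matrices. -/
noncomputable abbrev HermMat (d : ℕ) := selfAdjoint (Matrix (Fin d) (Fin d) ℂ)

/-- The Hilbert–Schmidt inner product `⟨x, y⟩ = Tr (x y)` on Hermitian matrices. -/
noncomputable def hsInner {d : ℕ} (x y : HermMat d) : ℝ :=
  (((x : Matrix (Fin d) (Fin d) ℂ) * (y : Matrix (Fin d) (Fin d) ℂ)).trace).re

/-- The Hilbert–Schmidt norm `‖x‖₂ = (Tr x²)^{1/2}` on Hermitian matrices. -/
noncomputable def hsNorm {d : ℕ} (x : HermMat d) : ℝ :=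
  Real.sqrt (hsInner x x)

/-- The set of rank-one orthogonal projections in `ℂ^{d×d}`, viewed inside the
Hermitian matrices. -/
def rankOneProjSet (d : ℕ) : Set (HermMat d) :=
  { p | ∃ v : EuclideanSpace ℂ (Fin d), ‖v‖ = 1 ∧
    (p : Matrix (Fin d) (Fin d) ℂ) = Matrix.of fun i j => v i * star (v j) }

/-!
Put `g u := f u - f (-u)`. Expanding `⟪g u, g v⟫` gives four terms, each within `ε` of `±⟪u, v⟫`,
so `|⟪g u, g v⟫ - 4 ⟪u, v⟫| ≤ 4 ε`; since `F x = ‖x‖ • g (x / (2 ‖x‖))`, this rescales to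
`|⟪F x, F y⟫ - ⟪x, y⟫| ≤ 4 ε ‖x‖ ‖y‖`. Expanding `‖∑ F xⱼ - F (∑ xⱼ)‖²` and `‖f x - F x‖²` and
comparing every term with the corresponding one for the identity map then gives (3) and (4), and
`‖F x‖² ≤ (1 + 4 ε) ‖x‖²` gives continuity at `0`. Nothing about matrices is used beyond the fact
that the trace form is a real inner product.
-/

open Metric
open scoped RealInnerProductSpace ComplexOrder

section OddHomogenization

variable {E : Type*} [NormedAddCommGroup E] [InnerProductSpace ℝ E]

def AlmostPreservesInnerOn (ε : ℝ) (f : E → E) (s : Set E) : Prop :=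
  ∀ x ∈ s, ∀ y ∈ s, |⟪f x, f y⟫ - ⟪x, y⟫| ≤ ε

lemma AlmostPreservesInnerOn.nonneg {ε : ℝ} {f : E → E} {s : Set E}
    (hf : AlmostPreservesInnerOn ε f s) (hs : s.Nonempty) : 0 ≤ ε :=
  let ⟨x, hx⟩ := hs
  (abs_nonneg _).trans (hf x hx x hx)

/-- At `x = 0` the factor `‖x‖` makes this `0`. -/
noncomputable def oddHomogenization (f : E → E) (x : E) : E :=
  ‖x‖ • (f ((2 * ‖x‖)⁻¹ • x) - f (-((2 * ‖x‖)⁻¹ • x)))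

lemma norm_inv_two_norm_smul_le (x : E) : ‖(2 * ‖x‖)⁻¹ • x‖ ≤ 1 := by
  rw [norm_smul, norm_inv, norm_mul, Real.norm_two, norm_norm]
  rcases (norm_nonneg x).eq_or_lt with h | h
  · simp [← h]
  · rw [mul_inv, mul_assoc, inv_mul_cancel₀ h.ne']
    norm_num

lemma two_norm_smul_inv_two_norm_smul (x : E) : (2 * ‖x‖) • (2 * ‖x‖)⁻¹ • x = x := by
  rcases eq_or_ne x 0 with rfl | hx
  · simp
  · rw [smul_smul, mul_inv_cancel₀ (by positivity), one_smul]

variable {ε : ℝ} {f : E → E}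

lemma oddHomogenization_zero : oddHomogenization f 0 = 0 := by
  simp [oddHomogenization]

lemma oddHomogenization_neg (x : E) : oddHomogenization f (-x) = -oddHomogenization f x := by
  simp only [oddHomogenization, norm_neg, neg_neg, ← smul_neg, neg_sub]

lemma oddHomogenization_smul_of_pos {c : ℝ} (hc : 0 < c) (x : E) :
    oddHomogenization f (c • x) = c • oddHomogenization f x := by
  have hscale : (2 * ‖c • x‖)⁻¹ • c • x = (2 * ‖x‖)⁻¹ • x := by
    rw [norm_smul, Real.norm_of_nonneg hc.le, smul_smul, mul_left_comm, mul_inv, mul_right_comm,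
      inv_mul_cancel₀ hc.ne', one_mul]
  rw [oddHomogenization, oddHomogenization, hscale, norm_smul, Real.norm_of_nonneg hc.le, mul_smul]

lemma oddHomogenization_smul (c : ℝ) (x : E) :
    oddHomogenization f (c • x) = c • oddHomogenization f x := by
  rcases lt_trichotomy c 0 with hc | rfl | hc
  · have h := oddHomogenization_smul_of_pos (f := f) (neg_pos.2 hc) x
    rwa [neg_smul, oddHomogenization_neg, neg_smul, neg_inj] at h
  · simp [oddHomogenization_zero]
  · exact oddHomogenization_smul_of_pos hc x

variable (hf : AlmostPreservesInnerOn ε f (closedBall 0 1))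
include hf

lemma abs_inner_sub_comp_neg_left_sub_le {u w : E} (hu : ‖u‖ ≤ 1) (hw : ‖w‖ ≤ 1) :
    |⟪f u - f (-u), f w⟫ - 2 * ⟪u, w⟫| ≤ 2 * ε := by
  have hu' : u ∈ closedBall (0 : E) 1 := mem_closedBall_zero_iff.2 hu
  have hnu : -u ∈ closedBall (0 : E) 1 := mem_closedBall_zero_iff.2 (by rwa [norm_neg])
  have hw' : w ∈ closedBall (0 : E) 1 := mem_closedBall_zero_iff.2 hw
  have h₁ := abs_le.1 (hf u hu' w hw')
  have h₂ := abs_le.1 (hf (-u) hnu w hw')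
  rw [inner_neg_left] at h₂
  rw [inner_sub_left, abs_le]
  constructor <;> linarith [h₁.1, h₁.2, h₂.1, h₂.2]

lemma abs_inner_sub_comp_neg_sub_le {u v : E} (hu : ‖u‖ ≤ 1) (hv : ‖v‖ ≤ 1) :
    |⟪f u - f (-u), f v - f (-v)⟫ - 4 * ⟪u, v⟫| ≤ 4 * ε := by
  have h₁ := abs_le.1 (abs_inner_sub_comp_neg_left_sub_le hf hu hv)
  have h₂ := abs_le.1 (abs_inner_sub_comp_neg_left_sub_le hf hu (w := -v) (by rwa [norm_neg]))
  rw [inner_neg_right] at h₂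
  rw [inner_sub_right, abs_le]
  constructor <;> linarith [h₁.1, h₁.2, h₂.1, h₂.2]

lemma abs_inner_oddHomogenization_left_sub_le (x : E) {w : E} (hw : ‖w‖ ≤ 1) :
    |⟪oddHomogenization f x, f w⟫ - ⟪x, w⟫| ≤ 2 * ε * ‖x‖ := by
  set u := (2 * ‖x‖)⁻¹ • x
  have hx : ⟪x, w⟫ = ‖x‖ * (2 * ⟪u, w⟫) := by
    conv_lhs => rw [← two_norm_smul_inv_two_norm_smul x]
    rw [real_inner_smul_left]
    ring
  rw [oddHomogenization, real_inner_smul_left, hx, ← mul_sub, abs_mul, abs_norm, mul_comm]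
  exact mul_le_mul_of_nonneg_right
    (abs_inner_sub_comp_neg_left_sub_le hf (norm_inv_two_norm_smul_le x) hw) (norm_nonneg x)

lemma abs_inner_oddHomogenization_sub_le (x y : E) :
    |⟪oddHomogenization f x, oddHomogenization f y⟫ - ⟪x, y⟫| ≤ 4 * ε * (‖x‖ * ‖y‖) := by
  set u := (2 * ‖x‖)⁻¹ • x
  set v := (2 * ‖y‖)⁻¹ • y
  have hxy : ⟪x, y⟫ = ‖x‖ * ‖y‖ * (4 * ⟪u, v⟫) := by
    conv_lhs => rw [← two_norm_smul_inv_two_norm_smul x, ← two_norm_smul_inv_two_norm_smul y]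
    rw [real_inner_smul_left, real_inner_smul_right]
    ring
  rw [oddHomogenization, oddHomogenization, real_inner_smul_left, real_inner_smul_right, hxy,
    ← mul_assoc, ← mul_sub, abs_mul, abs_of_nonneg (by positivity), mul_comm]
  exact mul_le_mul_of_nonneg_right (abs_inner_sub_comp_neg_sub_le hf
    (norm_inv_two_norm_smul_le x) (norm_inv_two_norm_smul_le y)) (by positivity)

lemma norm_oddHomogenization_le (x : E) : ‖oddHomogenization f x‖ ≤ √(1 + 4 * ε) * ‖x‖ := by
  have h := (abs_le.1 (abs_inner_oddHomogenization_sub_le hf x x)).2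
  rw [real_inner_self_eq_norm_sq, real_inner_self_eq_norm_sq] at h
  have hε := hf.nonneg ⟨0, mem_closedBall_self zero_le_one⟩
  rw [← sq_le_sq₀ (norm_nonneg _) (by positivity), mul_pow, Real.sq_sqrt (by positivity)]
  linarith

lemma continuousAt_oddHomogenization_zero : ContinuousAt (oddHomogenization f) 0 := by
  rw [ContinuousAt, oddHomogenization_zero, tendsto_zero_iff_norm_tendsto_zero]
  refine squeeze_zero (fun _ => norm_nonneg _) (norm_oddHomogenization_le hf) ?_
  simpa using ((continuous_norm (E := E)).tendsto 0).const_mul √(1 + 4 * ε)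

omit hf in
lemma continuousOn_oddHomogenization (hc : ContinuousOn f (closedBall 0 1)) :
    ContinuousOn (oddHomogenization f) {0}ᶜ := by
  have hu : ContinuousOn (fun x : E => (2 * ‖x‖)⁻¹ • x) {0}ᶜ :=
    ((continuous_const.mul continuous_norm).continuousOn.inv₀
      fun x hx => by simpa using hx).smul continuousOn_id
  have hmaps : Set.MapsTo (fun x : E => (2 * ‖x‖)⁻¹ • x) {0}ᶜ (closedBall 0 1) :=
    fun x _ => mem_closedBall_zero_iff.2 (norm_inv_two_norm_smul_le x)
  have hmaps' : Set.MapsTo (fun x : E => -((2 * ‖x‖)⁻¹ • x)) {0}ᶜ (closedBall 0 1) :=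
    fun x _ => mem_closedBall_zero_iff.2 (by rw [norm_neg]; exact norm_inv_two_norm_smul_le x)
  exact continuous_norm.continuousOn.smul ((hc.comp hu hmaps).sub (hc.comp hu.neg hmaps'))

theorem continuous_oddHomogenization (hc : ContinuousOn f (closedBall 0 1)) :
    Continuous (oddHomogenization f) := by
  refine continuous_iff_continuousAt.2 fun x => ?_
  rcases eq_or_ne x 0 with rfl | hx
  · exact continuousAt_oddHomogenization_zero hf
  · exact (continuousOn_oddHomogenization hc).continuousAt (isOpen_compl_singleton.mem_nhds hx)

theorem norm_sub_oddHomogenization_le {x : E} (hx : ‖x‖ ≤ 1) :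
    ‖f x - oddHomogenization f x‖ ≤ 3 * √ε := by
  have hε := hf.nonneg ⟨0, mem_closedBall_self zero_le_one⟩
  have hx' := mem_closedBall_zero_iff.2 hx
  have hff := (abs_le.1 (hf x hx' x hx')).2
  have hFf := (abs_le.1 (abs_inner_oddHomogenization_left_sub_le hf x hx)).1
  have hFF := (abs_le.1 (abs_inner_oddHomogenization_sub_le hf x x)).2
  rw [real_inner_self_eq_norm_sq] at hff hFF
  rw [← sq_le_sq₀ (norm_nonneg _) (by positivity), mul_pow, Real.sq_sqrt hε, norm_sub_sq_real,
    real_inner_comm]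
  have hx2 : ‖x‖ * ‖x‖ ≤ 1 := by nlinarith [norm_nonneg x]
  nlinarith [norm_nonneg x]

end OddHomogenization

section ApproximateAdditivity

variable {E : Type*} [NormedAddCommGroup E] [InnerProductSpace ℝ E] {G : E → E} {δ : ℝ}
  {ι : Type*} (t : Finset ι) (x : ι → E)

lemma abs_inner_sum_map_sub_le (hG : ∀ x y, |⟪G x, G y⟫ - ⟪x, y⟫| ≤ δ * (‖x‖ * ‖y‖)) (y : E) :
    |⟪∑ i ∈ t, G (x i), G y⟫ - ⟪∑ i ∈ t, x i, y⟫| ≤ δ * (∑ i ∈ t, ‖x i‖) * ‖y‖ := by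
  rw [sum_inner, sum_inner, ← sum_sub_distrib, mul_sum, sum_mul]
  exact (abs_sum_le_sum_abs _ _).trans (sum_le_sum fun i _ => by rw [mul_assoc]; exact hG _ _)

theorem norm_sum_map_sub_map_sum_le (hδ : 0 ≤ δ)
    (hG : ∀ x y, |⟪G x, G y⟫ - ⟪x, y⟫| ≤ δ * (‖x‖ * ‖y‖)) :
    ‖∑ i ∈ t, G (x i) - G (∑ i ∈ t, x i)‖ ≤ 2 * √δ * ∑ i ∈ t, ‖x i‖ := by
  set s := ∑ i ∈ t, x i
  set T := ∑ i ∈ t, ‖x i‖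
  have hsT : ‖s‖ ≤ T := norm_sum_le _ _
  have hAA : ⟪∑ i ∈ t, G (x i), ∑ i ∈ t, G (x i)⟫ - ⟪s, s⟫ ≤ δ * T * T := by
    rw [inner_sum, inner_sum, ← sum_sub_distrib, mul_sum]
    exact sum_le_sum fun i _ => (abs_le.1 (abs_inner_sum_map_sub_le t x hG (x i))).2
  have hAs : -(δ * T * ‖s‖) ≤ ⟪∑ i ∈ t, G (x i), G s⟫ - ⟪s, s⟫ :=
    (abs_le.1 (abs_inner_sum_map_sub_le t x hG s)).1
  have hss := (abs_le.1 (hG s s)).2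
  rw [← sq_le_sq₀ (norm_nonneg _) (by positivity), mul_pow, mul_pow, Real.sq_sqrt hδ,
    norm_sub_sq_real, ← real_inner_self_eq_norm_sq, ← real_inner_self_eq_norm_sq]
  have hT : 0 ≤ T := (norm_nonneg s).trans hsT
  have h₁ : δ * T * ‖s‖ ≤ δ * T * T := by gcongr
  have h₂ : δ * (‖s‖ * ‖s‖) ≤ δ * (T * T) := by gcongr
  linarith

end ApproximateAdditivity

instance (d : ℕ) : ContinuousSMul ℝ (HermMat d) :=
  ⟨continuous_induced_rng.2 (continuous_fst.smul (continuous_subtype_val.comp continuous_snd))⟩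

instance (d : ℕ) : FiniteDimensional ℝ (HermMat d) :=
  .of_injective (selfAdjoint.submodule ℝ (Matrix (Fin d) (Fin d) ℂ)).subtype Subtype.val_injective

section hsInner

variable {d : ℕ}

lemma hsInner_comm (x y : HermMat d) : hsInner x y = hsInner y x := by
  rw [hsInner, hsInner, Matrix.trace_mul_comm]

lemma hsInner_add_left (x y z : HermMat d) : hsInner (x + y) z = hsInner x z + hsInner y z := by
  simp [hsInner, add_mul]

lemma hsInner_smul_left (r : ℝ) (x y : HermMat d) : hsInner (r • x) y = r * hsInner x y := by
  simp [hsInner]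

lemma HermMat.conjTranspose_val (x : HermMat d) : (x : Matrix (Fin d) (Fin d) ℂ)ᴴ = x := x.2

lemma HermMat.trace_mul_self_nonneg (x : HermMat d) :
    0 ≤ ((x : Matrix (Fin d) (Fin d) ℂ) * (x : Matrix (Fin d) (Fin d) ℂ)).trace := by
  simpa only [HermMat.conjTranspose_val] using
    (posSemidef_conjTranspose_mul_self (x : Matrix (Fin d) (Fin d) ℂ)).trace_nonneg

lemma hsInner_self_nonneg (x : HermMat d) : 0 ≤ hsInner x x :=
  (Complex.nonneg_iff.1 (HermMat.trace_mul_self_nonneg x)).1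

lemma eq_zero_of_hsInner_self_eq_zero {x : HermMat d} (hx : hsInner x x = 0) : x = 0 := by
  have him := (Complex.nonneg_iff.1 (HermMat.trace_mul_self_nonneg x)).2
  refine Subtype.ext (Matrix.trace_conjTranspose_mul_self_eq_zero_iff.1 ?_)
  rw [HermMat.conjTranspose_val]
  exact Complex.ext hx him.symm

end hsInner

/-- `HermMat d` with the inner product `hsInner`, whose norm is `hsNorm`. -/
def HilbertSchmidtSpace (d : ℕ) : Type := HermMat d

namespace HilbertSchmidtSpace

variable {d : ℕ}

noncomputable instance : AddCommGroup (HilbertSchmidtSpace d) :=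
  inferInstanceAs (AddCommGroup (HermMat d))

noncomputable instance : Module ℝ (HilbertSchmidtSpace d) :=
  inferInstanceAs (Module ℝ (HermMat d))

noncomputable instance instCore : InnerProductSpace.Core ℝ (HilbertSchmidtSpace d) where
  inner := hsInner
  conj_inner_symm x y := hsInner_comm y x
  re_inner_nonneg := hsInner_self_nonneg
  add_left := hsInner_add_left
  smul_left x y r := hsInner_smul_left r x y
  definite _ := eq_zero_of_hsInner_self_eq_zero

noncomputable instance : NormedAddCommGroup (HilbertSchmidtSpace d) :=
  instCore.toNormedAddCommGroup

noncomputable instance : InnerProductSpace ℝ (HilbertSchmidtSpace d) :=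
  .ofCore instCore.toCore

/-- The identity map; it is a homeomorphism because `HermMat d` is finite-dimensional. -/
noncomputable def equivHermMat : HermMat d ≃L[ℝ] HilbertSchmidtSpace d :=
  LinearEquiv.toContinuousLinearEquiv
    { Equiv.refl _ with map_add' := fun _ _ => rfl, map_smul' := fun _ _ => rfl }

lemma norm_equivHermMat (x : HermMat d) : ‖equivHermMat x‖ = hsNorm x := rfl

end HilbertSchmidtSpace

theorem stmt11_general (d : ℕ) (ε : ℝ)
    (f : HermMat d → HermMat d)
    (hcont : ContinuousOn f { x : HermMat d | hsNorm x ≤ 1 })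
    (hsym : ∀ x ∈ { x : HermMat d | hsNorm x ≤ 1 }, ∀ y ∈ { x : HermMat d | hsNorm x ≤ 1 },
      |hsInner (f x) (f y) - hsInner x y| ≤ ε)
    (F : HermMat d → HermMat d)
    (hF0 : F 0 = 0)
    (hFdef : ∀ x : HermMat d, x ≠ 0 →
      F x = hsNorm x • (f ((2 * hsNorm x)⁻¹ • x) - f (-((2 * hsNorm x)⁻¹ • x)))) :
    Continuous F ∧
    (∀ (c : ℝ) (x : HermMat d), F (c • x) = c • F x) ∧
    (∀ (n : ℕ) (x : Fin n → HermMat d),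
      hsNorm ((∑ j, F (x j)) - F (∑ j, x j)) ≤ 4 * Real.sqrt ε * ∑ j, hsNorm (x j)) ∧
    (∀ x ∈ { x : HermMat d | hsNorm x ≤ 1 }, hsNorm (f x - F x) ≤ 3 * Real.sqrt ε) := by
  open HilbertSchmidtSpace in
  let g : HilbertSchmidtSpace d → HilbertSchmidtSpace d := equivHermMat ∘ f ∘ equivHermMat.symm
  -- `equivHermMat` is the identity, so inner products and norms transfer definitionally.
  have hg : AlmostPreservesInnerOn ε g (closedBall 0 1) := fun x hx y hy =>
    hsym _ (mem_closedBall_zero_iff.1 hx) _ (mem_closedBall_zero_iff.1 hy)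
  have hgc : ContinuousOn g (closedBall 0 1) :=
    equivHermMat.continuous.comp_continuousOn (hcont.comp equivHermMat.symm.continuous.continuousOn
      fun _ hx => mem_closedBall_zero_iff.1 hx)
  have hF : F = equivHermMat.symm ∘ oddHomogenization g ∘ equivHermMat := by
    funext x
    rcases eq_or_ne x 0 with rfl | hx
    · simp [hF0, oddHomogenization_zero]
    · exact hFdef x hx
  subst hF
  refine ⟨equivHermMat.symm.continuous.comp
      ((continuous_oddHomogenization hg hgc).comp equivHermMat.continuous),
    fun c x => by simp [oddHomogenization_smul], fun n x => ?_, fun x hx => ?_⟩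
  · have hε := hg.nonneg ⟨0, mem_closedBall_self zero_le_one⟩
    have h := norm_sum_map_sub_map_sum_le univ (equivHermMat ∘ x) (by positivity)
      (abs_inner_oddHomogenization_sub_le hg)
    have h4 : 2 * √(4 * ε) = 4 * √ε := by
      rw [Real.sqrt_mul zero_le_four, show (4 : ℝ) = 2 ^ 2 by norm_num, Real.sqrt_sq zero_le_two]
      ring
    rw [h4] at h
    simpa [← norm_equivHermMat, map_sum] using h
  · exact norm_sub_oddHomogenization_le hg hx

theorem stmt11 (d : ℕ) (ε : ℝ) (hε : 0 < ε)
    (f : HermMat d → HermMat d)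
    (hcont : ContinuousOn f { x : HermMat d | hsNorm x ≤ 1 })
    (hsym : ∀ x ∈ { x : HermMat d | hsNorm x ≤ 1 }, ∀ y ∈ { x : HermMat d | hsNorm x ≤ 1 },
      |hsInner (f x) (f y) - hsInner x y| ≤ ε)
    (F : HermMat d → HermMat d)
    (hF0 : F 0 = 0)
    (hFdef : ∀ x : HermMat d, x ≠ 0 →
      F x = hsNorm x • (f ((2 * hsNorm x)⁻¹ • x) - f (-((2 * hsNorm x)⁻¹ • x)))) :
    Continuous F ∧
    (∀ (c : ℝ) (x : HermMat d), F (c • x) = c • F x) ∧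
    (∀ (n : ℕ) (x : Fin n → HermMat d),
      hsNorm ((∑ j, F (x j)) - F (∑ j, x j)) ≤ 4 * Real.sqrt ε * ∑ j, hsNorm (x j)) ∧
    (∀ x ∈ { x : HermMat d | hsNorm x ≤ 1 }, hsNorm (f x - F x) ≤ 3 * Real.sqrt ε) :=
  stmt11_general d ε f hcont hsym F hF0 hFdef
end

section
/- Let d ≥ 1, ε > 0, and let f be a map from the set ℙ(ℂ^d) of rank-one orthogonal projections in ℂ^{d×d} to itself satisfying |Tr(f(x)f(y)) − Tr(xy)| ≤ ε for all x, y ∈ ℙ(ℂ^d). Then there exists a map F : H_d → H_d on the real vector space H_d of d×d complex Hermitian matrices such that F(p) = f(p) for every p ∈ ℙ(ℂ^d), F(λx) = λF(x) for all λ ∈ ℝ and x ∈ H_d, and for every m ∈ ℕ, x₁,…,x_m ∈ H_d and λ₁,…,λ_m ∈ ℝ: ‖Σᵢ λᵢF(xᵢ) − F(Σᵢ λᵢxᵢ)‖₂ ≤ 2√ε · Σᵢ |λᵢ|·‖xᵢ‖₁, where ‖·‖₂ is the Hilbert–Schmidt norm and ‖x‖₁ = Tr|x| is the trace norm. -/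
open Finset Matrix

/-- The trace norm `‖x‖₁ = Tr |x|` of a Hermitian matrix: the sum of the
absolute values of its eigenvalues. -/
noncomputable def trNorm {d : ℕ} (x : HermMat d) : ℝ :=
  ∑ i, |(Matrix.IsHermitian.eigenvalues x.2 i)|
/-!
Fix on every line `ℝ x` a base point `b`, chosen to be the rank-one projection on that line when
there is one, and a decomposition `b = ∑ wⱼ rⱼ` into rank-one projections with
`∑ |wⱼ| ≤ ‖b‖₁` (the spectral decomposition, or `p = 1 • p`), and put `F (t b) = t ∑ wⱼ f(rⱼ)`.
Since any such decomposition has weight at least `‖x‖₁`, scaling the decompositions of the `xᵢ`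
by `λᵢ` and subtracting that of `∑ λᵢ xᵢ` writes `∑ λᵢ F(xᵢ) - F(∑ λᵢ xᵢ)` as `∑ cₖ f(qₖ)` with
`∑ cₖ qₖ = 0` and `∑ |cₖ| ≤ 2 ∑ |λᵢ| ‖xᵢ‖₁`. Finally
`‖∑ cₖ f(qₖ)‖₂² = ∑ cₖ cₗ Tr(f(qₖ) f(qₗ))` differs from `∑ cₖ cₗ Tr(qₖ qₗ) = ‖∑ cₖ qₖ‖₂² = 0`
by at most `ε (∑ |cₖ|)²`.
-/

open scoped LinearAlgebra.Projectivization ComplexOrder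

namespace Projectivization

variable {K V : Type*} [Field K] [AddCommGroup V] [Module K V]

open Classical in
noncomputable def basePoint (S : Set V) (L : ℙ K V) : V :=
  if h : ∃ p ∈ S, ∃ hp : p ≠ 0, mk K p hp = L then h.choose else L.rep

lemma basePoint_ne_zero (S : Set V) (L : ℙ K V) : basePoint S L ≠ 0 := by
  unfold basePoint
  split_ifs with h
  · exact h.choose_spec.2.1
  · exact L.rep_nonzero

lemma mk_basePoint (S : Set V) (L : ℙ K V) :
    mk K (basePoint S L) (basePoint_ne_zero S L) = L := by
  unfold basePoint
  split_ifs with h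
  · exact h.choose_spec.2.2
  · exact L.mk_rep

lemma basePoint_mk_of_mem {S : Set V} (hS : ∀ p ∈ S, ∀ c : K, c • p ∈ S → c = 1)
    {p : V} (hp : p ∈ S) (hp0 : p ≠ 0) : basePoint S (mk K p hp0) = p := by
  have h : ∃ q ∈ S, ∃ hq : q ≠ 0, mk K q hq = mk K p hp0 := ⟨p, hp, hp0, rfl⟩
  obtain ⟨hqS, hq0, hqp⟩ := h.choose_spec
  obtain ⟨c, hc⟩ := (mk_eq_mk_iff' K _ _ hq0 hp0).1 hqp
  rw [basePoint, dif_pos h, ← hc, hS p hp c (hc ▸ hqS), one_smul]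

variable (K) in
noncomputable def lineCoord (S : Set V) (x : V) (hx : x ≠ 0) : K :=
  ((mk_eq_mk_iff' K _ _ hx _).1 (mk_basePoint S (mk K x hx)).symm).choose

variable (K) in
lemma lineCoord_smul_basePoint (S : Set V) (x : V) (hx : x ≠ 0) :
    lineCoord K S x hx • basePoint S (mk K x hx) = x :=
  ((mk_eq_mk_iff' K _ _ hx _).1 (mk_basePoint S (mk K x hx)).symm).choose_spec

lemma lineCoord_smul (S : Set V) (c : K) (x : V) (hx : x ≠ 0) (hcx : c • x ≠ 0) :
    lineCoord K S (c • x) hcx = c * lineCoord K S x hx := by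
  have h := lineCoord_smul_basePoint K S (c • x) hcx
  rw [(mk_eq_mk_iff' K _ _ hcx hx).2 ⟨c, rfl⟩] at h
  refine smul_left_injective K (basePoint_ne_zero S (mk K x hx)) ?_
  simp only [h, mul_smul, lineCoord_smul_basePoint K]

lemma lineCoord_of_mem {S : Set V} (hS : ∀ p ∈ S, ∀ c : K, c • p ∈ S → c = 1)
    {p : V} (hp : p ∈ S) (hp0 : p ≠ 0) : lineCoord K S p hp0 = 1 := by
  refine smul_left_injective K hp0 ?_
  simpa only [basePoint_mk_of_mem hS hp hp0, one_smul] using lineCoord_smul_basePoint K S p hp0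

end Projectivization

open Projectivization in
theorem exists_homogeneous_extension {K V W : Type*} [Field K] [AddCommGroup V] [Module K V]
    [AddCommGroup W] [Module K W] (S : Set V) (hS : ∀ p ∈ S, ∀ c : K, c • p ∈ S → c = 1)
    (R : V → W → Prop) (hR : ∀ (c : K) x y, R x y → R (c • x) (c • y))
    (hex : ∀ x, ∃ y, R x y) (g : V → W) (hg : ∀ p ∈ S, R p (g p)) :
    ∃ F : V → W, (∀ p ∈ S, F p = g p) ∧ (∀ (c : K) x, F (c • x) = c • F x) ∧
      ∀ x, R x (F x) := by
  classical
  have hS0 : ∀ p ∈ S, p ≠ 0 := fun p hp h0 =>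
    zero_ne_one (hS p hp 0 (by rwa [zero_smul, ← h0]))
  let Y : ℙ K V → W := fun L =>
    if basePoint S L ∈ S then g (basePoint S L) else (hex (basePoint S L)).choose
  have hY : ∀ L, R (basePoint S L) (Y L) := fun L => by
    by_cases h : basePoint S L ∈ S
    · simp only [Y, if_pos h]; exact hg _ h
    · simp only [Y, if_neg h]; exact (hex _).choose_spec
  refine ⟨fun x => if hx : x = 0 then 0 else lineCoord K S x hx • Y (mk K x hx), ?_, ?_, ?_⟩
  · intro p hp
    simp only [dif_neg (hS0 p hp), lineCoord_of_mem hS hp, one_smul, Y,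
      basePoint_mk_of_mem hS hp, if_pos hp]
  · intro c x
    by_cases hc : c = 0
    · simp [hc]
    by_cases hx : x = 0
    · simp [hx]
    have hcx : c • x ≠ 0 := smul_ne_zero hc hx
    simp only [dif_neg hx, dif_neg hcx, (mk_eq_mk_iff' K _ _ hcx hx).2 ⟨c, rfl⟩,
      lineCoord_smul S c x hx hcx, mul_smul]
  · intro x
    by_cases hx : x = 0
    · obtain ⟨y, hy⟩ := hex 0
      simpa [hx] using hR 0 0 y hy
    simp only [dif_neg hx]
    simpa only [lineCoord_smul_basePoint] using hR (lineCoord K S x hx) _ _ (hY (mk K x hx))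

theorem LinearMap.BilinForm.apply_sum_smul_le {ι V V' : Type*} [Fintype ι]
    [AddCommGroup V] [Module ℝ V] [AddCommGroup V'] [Module ℝ V']
    (B : LinearMap.BilinForm ℝ V) (B' : LinearMap.BilinForm ℝ V') (c : ι → ℝ)
    (u : ι → V) (v : ι → V') {ε : ℝ} (h : ∀ i k, |B (u i) (u k) - B' (v i) (v k)| ≤ ε) :
    B (∑ i, c i • u i) (∑ i, c i • u i) ≤
      B' (∑ i, c i • v i) (∑ i, c i • v i) + ε * (∑ i, |c i|) ^ 2 := by
  simp only [map_sum, map_smul, LinearMap.sum_apply, LinearMap.smul_apply, smul_eq_mul]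
  rw [sq, Finset.sum_mul_sum, Finset.mul_sum, ← Finset.sum_add_distrib]
  refine Finset.sum_le_sum fun i _ => ?_
  rw [Finset.mul_sum, Finset.mul_sum, Finset.mul_sum, ← Finset.sum_add_distrib]
  refine Finset.sum_le_sum fun k _ => ?_
  have hik : c i * c k * (B (u k) (u i) - B' (v k) (v i)) ≤ |c i| * |c k| * ε := by
    refine (le_abs_self _).trans ?_
    rw [abs_mul, abs_mul]
    exact mul_le_mul_of_nonneg_left (h k i) (by positivity)
  linear_combination hik

theorem trace_vecMulVec_mul {n R : Type*} [Fintype n] [CommSemiring R] (u w : n → R)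
    (A : Matrix n n R) : trace (vecMulVec u w * A) = w ⬝ᵥ (A *ᵥ u) := by
  rw [vecMulVec_mul, trace_vecMulVec, dotProduct_comm, dotProduct_mulVec]

theorem mul_diagonal_mul_star_eq_sum {n R : Type*} [Fintype n] [DecidableEq n] [CommSemiring R]
    [StarRing R] (U : Matrix n n R) (D : n → R) :
    U * diagonal D * star U = ∑ k, D k • vecMulVec (Uᵀ k) (star (Uᵀ k)) := by
  ext i j
  rw [mul_apply]
  simp only [mul_diagonal, Matrix.sum_apply, Matrix.smul_apply, vecMulVec_apply,
    star_apply, transpose_apply, Pi.star_apply, smul_eq_mul]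
  exact Finset.sum_congr rfl fun k _ => by ring

section

variable {d : ℕ}

noncomputable def hsForm : LinearMap.BilinForm ℝ (HermMat d) :=
  LinearMap.mk₂ ℝ hsInner
    (fun x y z => by simp [hsInner, add_mul])
    (fun c x y => by simp [hsInner, Complex.real_smul])
    (fun x y z => by simp [hsInner, mul_add])
    (fun c x y => by simp [hsInner, Complex.real_smul])

lemma hsForm_apply (x y : HermMat d) : hsForm x y = hsInner x y := rfl

def rankOneProj (v : EuclideanSpace ℂ (Fin d)) : HermMat d :=
  ⟨vecMulVec v (star v), by
    simp only [selfAdjoint.mem_iff, star_eq_conjTranspose, conjTranspose_vecMulVec, star_star]⟩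

lemma rankOneProj_mem {v : EuclideanSpace ℂ (Fin d)} (hv : ‖v‖ = 1) :
    rankOneProj v ∈ rankOneProjSet d :=
  ⟨v, hv, rfl⟩

lemma exists_eq_rankOneProj {p : HermMat d} (hp : p ∈ rankOneProjSet d) :
    ∃ v : EuclideanSpace ℂ (Fin d), ‖v‖ = 1 ∧ p = rankOneProj v := by
  obtain ⟨v, hv, hpv⟩ := hp
  exact ⟨v, hv, Subtype.ext hpv⟩

lemma re_trace_of_mem {p : HermMat d} (hp : p ∈ rankOneProjSet d) :
    (trace (p : Matrix (Fin d) (Fin d) ℂ)).re = 1 := by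
  obtain ⟨v, hv, rfl⟩ := exists_eq_rankOneProj hp
  change (trace (vecMulVec v (star v))).re = 1
  rw [trace_vecMulVec, ← EuclideanSpace.inner_eq_star_dotProduct, inner_self_eq_norm_sq_to_K, hv]
  simp

lemma hsInner_nonneg_of_mem {p q : HermMat d} (hp : p ∈ rankOneProjSet d)
    (hq : q ∈ rankOneProjSet d) : 0 ≤ hsInner p q := by
  obtain ⟨v, -, rfl⟩ := exists_eq_rankOneProj hp
  obtain ⟨w, -, rfl⟩ := exists_eq_rankOneProj hq
  have h := (posSemidef_vecMulVec_self_star (w : Fin d → ℂ)).dotProduct_mulVec_nonneg v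
  rw [hsInner, rankOneProj, rankOneProj, trace_vecMulVec_mul]
  exact (Complex.nonneg_iff.1 h).1

lemma eq_one_of_smul_mem_rankOneProjSet {p : HermMat d} (hp : p ∈ rankOneProjSet d) {c : ℝ}
    (hcp : c • p ∈ rankOneProjSet d) : c = 1 := by
  have h := re_trace_of_mem hcp
  rwa [selfAdjoint.val_smul, trace_smul, Complex.real_smul, Complex.re_ofReal_mul,
    re_trace_of_mem hp, mul_one] at h

noncomputable def eigenProj (x : HermMat d) (k : Fin d) : HermMat d :=
  rankOneProj (IsHermitian.eigenvectorBasis x.2 k)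

lemma eigenProj_mem (x : HermMat d) (k : Fin d) : eigenProj x k ∈ rankOneProjSet d :=
  rankOneProj_mem ((IsHermitian.eigenvectorBasis x.2).orthonormal.1 k)

lemma coe_eigenProj (x : HermMat d) (k : Fin d) :
    (eigenProj x k : Matrix (Fin d) (Fin d) ℂ) =
      vecMulVec ((IsHermitian.eigenvectorUnitary x.2 : Matrix (Fin d) (Fin d) ℂ)ᵀ k)
        (star ((IsHermitian.eigenvectorUnitary x.2 : Matrix (Fin d) (Fin d) ℂ)ᵀ k)) :=
  rfl

lemma sum_coe_eigenProj (x : HermMat d) :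
    ∑ k, (eigenProj x k : Matrix (Fin d) (Fin d) ℂ) = 1 := by
  have h := mul_diagonal_mul_star_eq_sum
    (IsHermitian.eigenvectorUnitary x.2 : Matrix (Fin d) (Fin d) ℂ) fun _ => 1
  rw [diagonal_one, mul_one,
    Unitary.mul_star_self_of_mem (IsHermitian.eigenvectorUnitary x.2).2] at h
  simpa only [coe_eigenProj, one_smul] using h.symm

lemma sum_eigenvalues_smul_eigenProj (x : HermMat d) :
    ∑ k, IsHermitian.eigenvalues x.2 k • eigenProj x k = x := by
  apply Subtype.ext
  have h := IsHermitian.spectral_theorem x.2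
  rw [Unitary.conjStarAlgAut_apply, mul_diagonal_mul_star_eq_sum] at h
  conv_rhs => rw [h]
  push_cast
  refine Finset.sum_congr rfl fun k _ => ?_
  rw [coe_eigenProj, RCLike.real_smul_eq_coe_smul (K := ℂ)]
  rfl

lemma hsInner_eigenProj (x : HermMat d) (k : Fin d) :
    hsInner (eigenProj x k) x = IsHermitian.eigenvalues x.2 k := by
  rw [IsHermitian.eigenvalues_eq x.2, hsInner, eigenProj, rankOneProj, trace_vecMulVec_mul]
  rfl

lemma hsInner_sum_eigenProj (x q : HermMat d) :
    hsInner (∑ k, eigenProj x k) q = (trace (q : Matrix (Fin d) (Fin d) ℂ)).re := by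
  rw [hsInner, AddSubgroup.val_finsetSum, sum_coe_eigenProj, one_mul]

lemma trNorm_le_of_sum_smul {n : ℕ} {w : Fin n → ℝ} {r : Fin n → HermMat d}
    (hr : ∀ j, r j ∈ rankOneProjSet d) : trNorm (∑ j, w j • r j) ≤ ∑ j, |w j| := by
  set x := ∑ j, w j • r j
  calc trNorm x = ∑ k, |hsForm (eigenProj x k) x| := by
        simp only [trNorm, hsForm_apply, hsInner_eigenProj]
    _ = ∑ k, |∑ j, w j * hsForm (eigenProj x k) (r j)| := by
        simp only [x, map_sum, map_smul, smul_eq_mul]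
    _ ≤ ∑ k, ∑ j, |w j| * hsForm (eigenProj x k) (r j) := by
        refine Finset.sum_le_sum fun k _ => (Finset.abs_sum_le_sum_abs _ _).trans_eq ?_
        refine Finset.sum_congr rfl fun j _ => ?_
        rw [abs_mul, hsForm_apply,
          abs_of_nonneg (hsInner_nonneg_of_mem (eigenProj_mem x k) (hr j))]
    _ = ∑ j, |w j| := by
        rw [Finset.sum_comm]
        refine Finset.sum_congr rfl fun j _ => ?_
        rw [← Finset.mul_sum, ← LinearMap.sum_apply, ← map_sum, hsForm_apply,
          hsInner_sum_eigenProj, re_trace_of_mem (hr j), mul_one]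

lemma trNorm_nonneg (x : HermMat d) : 0 ≤ trNorm x :=
  Finset.sum_nonneg fun _ _ => abs_nonneg _

lemma trNorm_smul_le (c : ℝ) (x : HermMat d) : trNorm (c • x) ≤ |c| * trNorm x := by
  have h := trNorm_le_of_sum_smul (w := fun k => c * IsHermitian.eigenvalues x.2 k)
    (eigenProj_mem x)
  simp only [mul_smul, ← Finset.smul_sum, sum_eigenvalues_smul_eigenProj, abs_mul,
    ← Finset.mul_sum] at h
  exact h

lemma trNorm_smul (c : ℝ) (x : HermMat d) : trNorm (c • x) = |c| * trNorm x := by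
  refine (trNorm_smul_le c x).antisymm ?_
  rcases eq_or_ne c 0 with rfl | hc
  · simpa using trNorm_nonneg _
  calc |c| * trNorm x = |c| * trNorm (c⁻¹ • c • x) := by rw [inv_smul_smul₀ hc]
    _ ≤ |c| * (|c⁻¹| * trNorm (c • x)) := by gcongr; exact trNorm_smul_le _ _
    _ = trNorm (c • x) := by rw [abs_inv, mul_inv_cancel_left₀ (abs_ne_zero.2 hc)]

lemma abs_re_trace_le_trNorm (x : HermMat d) :
    |(trace (x : Matrix (Fin d) (Fin d) ℂ)).re| ≤ trNorm x := by
  have hx : (x : Matrix (Fin d) (Fin d) ℂ).IsHermitian := x.2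
  have h : (trace (x : Matrix (Fin d) (Fin d) ℂ)).re = ∑ i, hx.eigenvalues i := by
    rw [hx.trace_eq_sum_eigenvalues, Complex.re_sum]
    rfl
  rw [h]
  exact Finset.abs_sum_le_sum_abs _ _

lemma one_le_trNorm_of_mem {p : HermMat d} (hp : p ∈ rankOneProjSet d) : 1 ≤ trNorm p := by
  simpa only [re_trace_of_mem hp, abs_one] using abs_re_trace_le_trNorm p

def IsProjDecomp (f : HermMat d → HermMat d) (x y : HermMat d) (s : ℝ) : Prop :=
  ∃ (n : ℕ) (w : Fin n → ℝ) (r : Fin n → HermMat d), (∀ j, r j ∈ rankOneProjSet d) ∧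
    ∑ j, w j • r j = x ∧ ∑ j, w j • f (r j) = y ∧ ∑ j, |w j| ≤ s

namespace IsProjDecomp

variable {f : HermMat d → HermMat d} {x y x' y' : HermMat d} {s s' : ℝ}

lemma zero : IsProjDecomp f 0 0 0 :=
  ⟨0, Fin.elim0, Fin.elim0, fun j => j.elim0, by simp, by simp, by simp⟩

lemma of_mem {p : HermMat d} (hp : p ∈ rankOneProjSet d) : IsProjDecomp f p (f p) 1 :=
  ⟨1, fun _ => 1, fun _ => p, fun _ => hp, by simp, by simp, by simp⟩

lemma spectral (f : HermMat d → HermMat d) (x : HermMat d) :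
    IsProjDecomp f x (∑ k, IsHermitian.eigenvalues x.2 k • f (eigenProj x k)) (trNorm x) :=
  ⟨d, _, _, eigenProj_mem x, sum_eigenvalues_smul_eigenProj x, rfl, le_rfl⟩

lemma mono (h : IsProjDecomp f x y s) (hs : s ≤ s') : IsProjDecomp f x y s' := by
  obtain ⟨n, w, r, hr, hx, hy, hw⟩ := h
  exact ⟨n, w, r, hr, hx, hy, hw.trans hs⟩

lemma smul (h : IsProjDecomp f x y s) (c : ℝ) : IsProjDecomp f (c • x) (c • y) (|c| * s) := by
  obtain ⟨n, w, r, hr, rfl, rfl, hw⟩ := h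
  refine ⟨n, fun j => c * w j, r, hr, ?_, ?_, ?_⟩
  · simp only [mul_smul, Finset.smul_sum]
  · simp only [mul_smul, Finset.smul_sum]
  · simp only [abs_mul, ← Finset.mul_sum]
    exact mul_le_mul_of_nonneg_left hw (abs_nonneg c)

lemma add (h : IsProjDecomp f x y s) (h' : IsProjDecomp f x' y' s') :
    IsProjDecomp f (x + x') (y + y') (s + s') := by
  obtain ⟨n, w, r, hr, rfl, rfl, hw⟩ := h
  obtain ⟨n', w', r', hr', rfl, rfl, hw'⟩ := h'
  refine ⟨n + n', Fin.append w w', Fin.append r r', fun j => ?_, ?_, ?_, ?_⟩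
  · refine Fin.addCases (fun i => ?_) (fun i => ?_) j <;> simp [hr, hr']
  · simp [Fin.sum_univ_add]
  · simp [Fin.sum_univ_add]
  · simpa [Fin.sum_univ_add] using add_le_add hw hw'

lemma sub (h : IsProjDecomp f x y s) (h' : IsProjDecomp f x' y' s') :
    IsProjDecomp f (x - x') (y - y') (s + s') := by
  simpa [sub_eq_add_neg] using h.add (h'.smul (-1))

lemma sum {ι : Type*} (t : Finset ι) {x y : ι → HermMat d} {s : ι → ℝ}
    (h : ∀ i ∈ t, IsProjDecomp f (x i) (y i) (s i)) :
    IsProjDecomp f (∑ i ∈ t, x i) (∑ i ∈ t, y i) (∑ i ∈ t, s i) := by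
  classical
  induction t using Finset.induction_on with
  | empty => simpa using zero
  | insert i t hi ih =>
    rw [Finset.sum_insert hi, Finset.sum_insert hi, Finset.sum_insert hi]
    exact (h i (Finset.mem_insert_self i t)).add (ih fun j hj => h j (Finset.mem_insert_of_mem hj))

lemma trNorm_le (h : IsProjDecomp f x y s) : trNorm x ≤ s := by
  obtain ⟨n, w, r, hr, rfl, -, hw⟩ := h
  exact (trNorm_le_of_sum_smul hr).trans hw

lemma hsNorm_le {ε : ℝ}
    (hsym : ∀ p ∈ rankOneProjSet d, ∀ q ∈ rankOneProjSet d,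
      |hsInner (f p) (f q) - hsInner p q| ≤ ε)
    (h : IsProjDecomp f 0 y s) : hsNorm y ≤ Real.sqrt ε * s := by
  obtain ⟨n, w, r, hr, hx, rfl, hw⟩ := h
  have hB := hsForm.apply_sum_smul_le hsForm w (f ∘ r) r fun i k => hsym _ (hr i) _ (hr k)
  rw [hx, map_zero, zero_add] at hB
  calc hsNorm (∑ j, w j • f (r j)) ≤ Real.sqrt (ε * (∑ j, |w j|) ^ 2) := Real.sqrt_le_sqrt hB
    _ = Real.sqrt ε * ∑ j, |w j| := by
        rw [Real.sqrt_mul' _ (sq_nonneg _), Real.sqrt_sq (Finset.sum_nonneg fun j _ => abs_nonneg _)]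
    _ ≤ Real.sqrt ε * s := mul_le_mul_of_nonneg_left hw (Real.sqrt_nonneg ε)

end IsProjDecomp

end

theorem stmt18_general (d : ℕ) (ε : ℝ)
    (f : HermMat d → HermMat d)
    (hsym : ∀ p ∈ rankOneProjSet d, ∀ q ∈ rankOneProjSet d,
      |hsInner (f p) (f q) - hsInner p q| ≤ ε) :
    ∃ F : HermMat d → HermMat d,
      (∀ p ∈ rankOneProjSet d, F p = f p) ∧
      (∀ (c : ℝ) (x : HermMat d), F (c • x) = c • F x) ∧
      (∀ (m : ℕ) (x : Fin m → HermMat d) (l : Fin m → ℝ),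
        hsNorm ((∑ i, l i • F (x i)) - F (∑ i, l i • x i)) ≤
          2 * Real.sqrt ε * ∑ i, |l i| * trNorm (x i)) := by
  obtain ⟨F, hFf, hFsmul, hF⟩ := exists_homogeneous_extension (rankOneProjSet d)
    (fun p hp c hcp => eq_one_of_smul_mem_rankOneProjSet hp hcp)
    (fun x y => IsProjDecomp f x y (trNorm x))
    (fun c x y h => (h.smul c).mono (trNorm_smul c x).ge)
    (fun x => ⟨_, IsProjDecomp.spectral f x⟩) f
    (fun p hp => (IsProjDecomp.of_mem hp).mono (one_le_trNorm_of_mem hp))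
  refine ⟨F, hFf, hFsmul, fun m x l => ?_⟩
  have hsum : IsProjDecomp f (∑ i, l i • x i) (∑ i, l i • F (x i))
      (∑ i, |l i| * trNorm (x i)) :=
    IsProjDecomp.sum _ fun i _ => (hF (x i)).smul (l i)
  have hdiff := hsum.sub (hF (∑ i, l i • x i))
  rw [sub_self] at hdiff
  calc _ ≤ Real.sqrt ε * (∑ i, |l i| * trNorm (x i) + trNorm (∑ i, l i • x i)) :=
        hdiff.hsNorm_le hsym
    _ ≤ Real.sqrt ε * (∑ i, |l i| * trNorm (x i) + ∑ i, |l i| * trNorm (x i)) := by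
        gcongr
        exact hsum.trNorm_le
    _ = 2 * Real.sqrt ε * ∑ i, |l i| * trNorm (x i) := by ring

theorem stmt18 (d : ℕ) (hd : 1 ≤ d) (ε : ℝ) (hε : 0 < ε)
    (f : HermMat d → HermMat d)
    (hmap : ∀ p ∈ rankOneProjSet d, f p ∈ rankOneProjSet d)
    (hsym : ∀ p ∈ rankOneProjSet d, ∀ q ∈ rankOneProjSet d,
      |hsInner (f p) (f q) - hsInner p q| ≤ ε) :
    ∃ F : HermMat d → HermMat d,
      (∀ p ∈ rankOneProjSet d, F p = f p) ∧
      (∀ (c : ℝ) (x : HermMat d), F (c • x) = c • F x) ∧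
      (∀ (m : ℕ) (x : Fin m → HermMat d) (l : Fin m → ℝ),
        hsNorm ((∑ i, l i • F (x i)) - F (∑ i, l i • x i)) ≤
          2 * Real.sqrt ε * ∑ i, |l i| * trNorm (x i)) :=
  stmt18_general d ε f hsym
end
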